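/- Gronwall-type growth estimate for triangular weighted systems: let w₁ ≤ ⋯ ≤ wₙ be positive integers, u ∈ L¹([0,T]), and x: [0,T] → ℝⁿ absolutely continuous with x(0) = 0 and |ẋᵢ(t)| ≤ C |u(t)| ‖x(t)‖^{wᵢ − 1} for a.e. t, where ‖z‖ = Σⱼ |zⱼ|^{1/wⱼ}. Then there exists C′ > 0 (depending only on C, n, and the weights) such that ‖x(t)‖ ≤ C′ ∫₀ᵗ |u(s)| ds for all t, provided ∫₀ᵀ |u| ds is small enough. -/

import Mathlib

/-! Let `M` be the maximum of `‖x‖ = Σⱼ |xⱼ|^{1/wⱼ}` on `[0, t]` and `φ = ∫₀ᵗ |u|`. Integrating the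
bound on `ẋᵢ` gives `|xᵢ| ≤ C φ M^{wᵢ-1}` on `[0, t]`, hence `M ≤ Σⱼ (C φ M^{wⱼ-1})^{1/wⱼ}`.
Some summand is at least `M / n`, and `(M / n)^{wⱼ} ≤ C φ M^{wⱼ-1}` yields `M ≤ n^{wⱼ} C φ`. -/

open MeasureTheory Set

theorem abs_sub_le_integral_of_abs_deriv_le {f f' φ : ℝ → ℝ} {a b : ℝ} (hab : a ≤ b)
    (hf : ∀ x ∈ Icc a b, HasDerivAt f (f' x) x) (hφ : IntervalIntegrable φ volume a b)
    (hbound : ∀ x ∈ Icc a b, |f' x| ≤ φ x) :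
    |f b - f a| ≤ ∫ x in a..b, φ x := by
  have hcont : ContinuousOn f (Icc a b) := fun x hx => (hf x hx).continuousAt.continuousWithinAt
  have hderiv : ∀ x ∈ Ioo a b, HasDerivWithinAt f (f' x) (Ioi x) x :=
    fun x hx => (hf x (Ioo_subset_Icc_self hx)).hasDerivWithinAt
  have hφ' : IntegrableOn φ (Icc a b) := (intervalIntegrable_iff_integrableOn_Icc_of_le hab).1 hφ
  have hupper := intervalIntegral.sub_le_integral_of_hasDeriv_right_of_le hab hcont hderiv hφ'
    fun x hx => (le_abs_self _).trans (hbound x (Ioo_subset_Icc_self hx))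
  have hlower := intervalIntegral.integral_le_sub_of_hasDeriv_right_of_le (φ := fun x => -φ x)
    hab hcont hderiv hφ'.neg
    fun x hx => neg_le.1 ((neg_le_abs _).trans (hbound x (Ioo_subset_Icc_self hx)))
  rw [intervalIntegral.integral_neg] at hlower
  exact abs_le.2 ⟨hlower, hupper⟩

theorem le_of_pow_le_mul_pow_pred {M c : ℝ} {k : ℕ} (hM : 0 < M) (hk : k ≠ 0)
    (h : M ^ k ≤ c * M ^ (k - 1)) : M ≤ c := by
  rw [← pow_sub_one_mul hk, mul_comm c] at h
  exact le_of_mul_le_mul_left h (pow_pos hM _)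

theorem le_card_pow_sup_mul_of_le_sum_rpow {ι : Type*} [Fintype ι] {w : ι → ℕ}
    (hw : ∀ i, 1 ≤ w i) {a M : ℝ} (ha : 0 ≤ a) (hM : 0 ≤ M)
    (h : M ≤ ∑ j, (a * M ^ (w j - 1)) ^ ((1 : ℝ) / w j)) :
    M ≤ (Fintype.card ι : ℝ) ^ Finset.univ.sup w * a := by
  rcases hM.eq_or_lt with rfl | hM
  · positivity
  have hι : Nonempty ι := by
    by_contra hempty
    rw [not_nonempty_iff] at hempty
    simp only [Finset.univ_eq_empty, Finset.sum_empty] at h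
    linarith
  set n : ℝ := (Fintype.card ι : ℝ)
  have hn : 1 ≤ n := Nat.one_le_cast.2 Fintype.card_pos
  obtain ⟨j, -, hj⟩ : ∃ j ∈ Finset.univ, M / n ≤ (a * M ^ (w j - 1)) ^ ((1 : ℝ) / w j) := by
    refine Finset.exists_le_of_sum_le Finset.univ_nonempty (le_of_eq_of_le ?_ h)
    rw [Finset.sum_const, Finset.card_univ, nsmul_eq_mul, mul_div_cancel₀ _ (by positivity)]
  have hwj : (0 : ℝ) < w j := by exact_mod_cast hw j
  rw [one_div, Real.le_rpow_inv_iff_of_pos (by positivity) (by positivity) hwj, Real.rpow_natCast,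
    div_pow, div_le_iff₀ (by positivity)] at hj
  calc M ≤ n ^ w j * a :=
        le_of_pow_le_mul_pow_pred hM (Nat.one_le_iff_ne_zero.1 (hw j)) (by linarith)
    _ ≤ n ^ Finset.univ.sup w * a := by
        gcongr
        exact Finset.le_sup (Finset.mem_univ j)

noncomputable def weightedNorm {ι : Type*} [Fintype ι] (w : ι → ℕ) (z : ι → ℝ) : ℝ :=
  ∑ j, |z j| ^ ((1 : ℝ) / w j)

section

variable {ι : Type*} [Fintype ι] (w : ι → ℕ)

theorem weightedNorm_nonneg (z : ι → ℝ) : 0 ≤ weightedNorm w z :=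
  Finset.sum_nonneg fun _ _ => by positivity

theorem continuous_weightedNorm : Continuous (weightedNorm w) :=
  continuous_finsetSum _ fun j _ =>
    (Real.continuous_rpow_const (by positivity)).comp (continuous_apply j).abs

end

theorem weightedNorm_le_of_abs_deriv_le {ι : Type*} [Fintype ι] {w : ι → ℕ} (hw : ∀ i, 1 ≤ w i)
    {C t : ℝ} (hC : 0 ≤ C) (ht : 0 ≤ t) {u : ℝ → ℝ}
    (hu : IntervalIntegrable (fun s => |u s|) volume 0 t) {x x' : ℝ → ι → ℝ} (hx0 : x 0 = 0)
    (hx : ∀ s ∈ Icc 0 t, ∀ i, HasDerivAt (fun s => x s i) (x' s i) s ∧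
      |x' s i| ≤ C * |u s| * weightedNorm w (x s) ^ (w i - 1)) :
    weightedNorm w (x t) ≤ (Fintype.card ι : ℝ) ^ Finset.univ.sup w * (C * ∫ s in 0..t, |u s|) := by
  have hcont : ContinuousOn (fun s => weightedNorm w (x s)) (Icc 0 t) :=
    (continuous_weightedNorm w).comp_continuousOn <| continuousOn_pi.2 fun i s hs =>
      (hx s hs i).1.continuousAt.continuousWithinAt
  obtain ⟨s₀, hs₀, hmax⟩ := isCompact_Icc.exists_isMaxOn (nonempty_Icc.2 ht) hcont
  set M := weightedNorm w (x s₀)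
  have hcoord : ∀ i, |x s₀ i| ≤ C * (∫ s in 0..t, |u s|) * M ^ (w i - 1) := by
    intro i
    have hsub : Icc 0 s₀ ⊆ Icc 0 t := Icc_subset_Icc_right hs₀.2
    have hu₀ : IntervalIntegrable (fun s => |u s|) volume 0 s₀ :=
      hu.mono_set (by simpa [uIcc_of_le ht, uIcc_of_le hs₀.1] using hsub)
    calc |x s₀ i| = |x s₀ i - x 0 i| := by simp [hx0]
      _ ≤ ∫ s in 0..s₀, C * M ^ (w i - 1) * |u s| := by
          refine abs_sub_le_integral_of_abs_deriv_le hs₀.1 (fun s hs => (hx s (hsub hs) i).1)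
            (hu₀.const_mul _) fun s hs => ?_
          calc |x' s i| ≤ C * |u s| * weightedNorm w (x s) ^ (w i - 1) := (hx s (hsub hs) i).2
            _ ≤ C * |u s| * M ^ (w i - 1) := by
                gcongr
                · exact weightedNorm_nonneg w _
                · exact hmax (hsub hs)
            _ = C * M ^ (w i - 1) * |u s| := by ring
      _ = C * M ^ (w i - 1) * ∫ s in 0..s₀, |u s| := intervalIntegral.integral_const_mul _ _
      _ ≤ C * M ^ (w i - 1) * ∫ s in 0..t, |u s| := by
          have : 0 ≤ M := weightedNorm_nonneg w _
          gcongr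
          exact intervalIntegral.integral_mono_interval le_rfl hs₀.1 hs₀.2
              (Filter.Eventually.of_forall fun s => abs_nonneg _) hu
      _ = C * (∫ s in 0..t, |u s|) * M ^ (w i - 1) := by ring
  have hM : M ≤ ∑ j, (C * (∫ s in 0..t, |u s|) * M ^ (w j - 1)) ^ ((1 : ℝ) / w j) :=
    Finset.sum_le_sum fun j _ => Real.rpow_le_rpow (abs_nonneg _) (hcoord j) (by positivity)
  exact (hmax ⟨ht, le_rfl⟩).trans <| le_card_pow_sup_mul_of_le_sum_rpow hw
    (mul_nonneg hC (intervalIntegral.integral_nonneg ht fun _ _ => abs_nonneg _))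
    (weightedNorm_nonneg w _) hM

theorem stmt14_general (n : ℕ) (w : Fin n → ℕ) (hw : ∀ i, 1 ≤ w i)
    (C : ℝ) (hC : 0 < C) :
    ∃ ε₀ : ℝ, 0 < ε₀ ∧ ∃ C' : ℝ, 0 < C' ∧
      ∀ (T : ℝ) (u : ℝ → ℝ) (x x' : ℝ → Fin n → ℝ),
        0 ≤ T →
        IntervalIntegrable (fun t => |u t|) volume 0 T →
        x 0 = 0 →
        (∀ t ∈ Icc (0:ℝ) T, ∀ i,
          HasDerivAt (fun s => x s i) (x' t i) t ∧
          |x' t i| ≤ C * |u t| * (∑ j, |x t j| ^ ((1:ℝ) / w j)) ^ (w i - 1)) →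
        (∫ s in (0:ℝ)..T, |u s|) ≤ ε₀ →
        ∀ t ∈ Icc (0:ℝ) T,
          (∑ j, |x t j| ^ ((1:ℝ) / w j)) ≤ C' * ∫ s in (0:ℝ)..t, |u s| := by
  refine ⟨1, one_pos, ((n : ℝ) + 1) ^ Finset.univ.sup w * C, by positivity, ?_⟩
  intro T u x x' hT hu hx0 hx _ t ht
  have hsub : Icc 0 t ⊆ Icc 0 T := Icc_subset_Icc_right ht.2
  have hut : IntervalIntegrable (fun s => |u s|) volume 0 t :=
    hu.mono_set (by simpa [uIcc_of_le hT, uIcc_of_le ht.1] using hsub)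
  have hφ : 0 ≤ ∫ s in 0..t, |u s| := intervalIntegral.integral_nonneg ht.1 fun _ _ => abs_nonneg _
  calc weightedNorm w (x t)
      ≤ (n : ℝ) ^ Finset.univ.sup w * (C * ∫ s in 0..t, |u s|) := by
        simpa using weightedNorm_le_of_abs_deriv_le hw hC.le ht.1 hut hx0 fun s hs => hx s (hsub hs)
    _ ≤ ((n : ℝ) + 1) ^ Finset.univ.sup w * C * ∫ s in 0..t, |u s| := by
        rw [mul_assoc]
        gcongr
        linarith

/-- Gronwall-type growth estimate for triangular weighted systems: if `x(0) = 0`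
and `|ẋᵢ(t)| ≤ C |u(t)| ‖x(t)‖^{wᵢ−1}` with `‖z‖ = Σⱼ |zⱼ|^{1/wⱼ}`, then there
are `ε₀, C′ > 0` (depending only on `C`, `n` and the weights) such that
`‖x(t)‖ ≤ C′ ∫₀ᵗ |u(s)| ds` whenever `∫₀ᵀ |u| ≤ ε₀`. -/
theorem stmt14 (n : ℕ) (w : Fin n → ℕ) (hw : ∀ i, 1 ≤ w i)
    (hmono : ∀ i j : Fin n, i ≤ j → w i ≤ w j) (C : ℝ) (hC : 0 < C) :
    ∃ ε₀ : ℝ, 0 < ε₀ ∧ ∃ C' : ℝ, 0 < C' ∧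
      ∀ (T : ℝ) (u : ℝ → ℝ) (x x' : ℝ → Fin n → ℝ),
        0 ≤ T →
        IntervalIntegrable (fun t => |u t|) volume 0 T →
        x 0 = 0 →
        (∀ t ∈ Icc (0:ℝ) T, ∀ i,
          HasDerivAt (fun s => x s i) (x' t i) t ∧
          |x' t i| ≤ C * |u t| * (∑ j, |x t j| ^ ((1:ℝ) / w j)) ^ (w i - 1)) →
        (∫ s in (0:ℝ)..T, |u s|) ≤ ε₀ →
        ∀ t ∈ Icc (0:ℝ) T,
          (∑ j, |x t j| ^ ((1:ℝ) / w j)) ≤ C' * ∫ s in (0:ℝ)..t, |u s| :=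
  stmt14_general n w hw C hC
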